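/- arXiv:1707.01487 — 5 statements merged into one kernel-verified Lean document; each statement's English description precedes it below -/
import Mathlib

section
/- In a two-color f-SAND instance with |C_G| = |C_B|, let M be any perfect matching between C_G and C_B, and for each matched pair (g,b) let T_{gb} be a connected subgraph of G containing r, g and b. Then the capacity installation x that assigns to each edge e the number of matched pairs (g,b) with e ∈ T_{gb} is a feasible installation, and its cost is at most ∑_{(g,b)∈M} (total edge weight of T_{gb}). -/
open scoped Classical
open Finset

namespace FSand

variable {V : Type} [Fintype V] [DecidableEq V]

/-- An edge crosses the cut `(S, Sᶜ)`. -/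
def Crossing (S : Finset V) (e : Sym2 V) : Prop :=
  ∃ u v, e = s(u, v) ∧ u ∈ S ∧ v ∉ S

/-- Total capacity installed on edges crossing the cut `(S, Sᶜ)`. -/
noncomputable def cutCap (x : Sym2 V → ℕ) (S : Finset V) : ℕ :=
  ∑ e ∈ Finset.univ.filter (Crossing S), x e

/-- Feasibility of a capacity installation for the f-SAND instance `(G, r, C)`. -/
def Feasible {ι : Type} (G : SimpleGraph V) (r : V) (C : ι → Finset V)
    (x : Sym2 V → ℕ) : Prop :=
  (∀ e, e ∉ G.edgeSet → x e = 0) ∧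
  ∀ S : Finset V, r ∉ S → ∀ i : ι, (C i ∩ S).card ≤ cutCap x S

/-- Cost of a capacity installation. -/
noncomputable def instCost (w : Sym2 V → ℝ) (x : Sym2 V → ℕ) : ℝ :=
  ∑ e : Sym2 V, w e * (x e : ℝ)

/-- Total weight of the edges of a subgraph. -/
noncomputable def subgraphCost (G : SimpleGraph V) (w : Sym2 V → ℝ) (H : G.Subgraph) : ℝ :=
  ∑ e ∈ Finset.univ.filter (· ∈ H.edgeSet), w e

/-- Minimum weight of a connected subgraph of `G` containing all vertices of `T`. -/
noncomputable def steinerCost (G : SimpleGraph V) (w : Sym2 V → ℝ) (T : Set V) : ℝ :=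
  sInf {c | ∃ H : G.Subgraph, H.Connected ∧ T ⊆ H.verts ∧ c = subgraphCost G w H}

/-- Optimal value of the f-SAND instance. -/
noncomputable def OPT {ι : Type} (G : SimpleGraph V) (r : V) (C : ι → Finset V)
    (w : Sym2 V → ℝ) : ℝ :=
  sInf {c | ∃ x : Sym2 V → ℕ, Feasible G r C x ∧ instCost w x = c}

end FSand


lemma walk_cross' {V : Type*} {G : SimpleGraph V} (P : V → Prop) :
    ∀ {u v : V} (_ : G.Walk u v), P u → ¬P v → ∃ a b, G.Adj a b ∧ P a ∧ ¬P b := by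
  intro u v p
  induction p with
  | nil => intro h h'; exact absurd h h'
  | @cons a c v h p ih =>
    intro hu hv
    by_cases hc : P c
    · exact ih hc hv
    · exact ⟨a, c, h, hu, hc⟩

lemma subgraph_cross' {V : Type*} {G : SimpleGraph V} (H : G.Subgraph)
    (hc : H.Connected) {S : Set V} {u v : V} (hu : u ∈ H.verts) (hv : v ∈ H.verts)
    (huS : u ∈ S) (hvS : v ∉ S) :
    ∃ a b, H.Adj a b ∧ a ∈ S ∧ b ∉ S := by
  obtain ⟨p⟩ := hc.preconnected ⟨u, hu⟩ ⟨v, hv⟩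
  obtain ⟨a, b, hab, ha, hb⟩ := walk_cross' (fun x : H.verts => x.1 ∈ S) p huS hvS
  exact ⟨a.1, b.1, hab, ha, hb⟩

open FSand in
/-- given any perfect matching `σ` between the green and blue terminals and,
for each matched pair `(g, b)`, a connected subgraph `T g` of `G` containing `r`, `g` and `b`,
the installation assigning to each edge the number of matched pairs whose subgraph uses it
is feasible, and its cost is at most the total weight of the chosen subgraphs. -/
theorem stmt_1 {V : Type} [Fintype V] [DecidableEq V]
    (G : SimpleGraph V) (w : Sym2 V → ℝ) (hw : ∀ e, 0 ≤ w e)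
    (r : V) (CG CB : Finset V) (hrG : r ∉ CG) (hrB : r ∉ CB)
    (hcard : CG.card = CB.card)
    (σ : {g // g ∈ CG} ≃ {b // b ∈ CB})
    (T : {g // g ∈ CG} → G.Subgraph)
    (hTconn : ∀ g, (T g).Connected)
    (hTr : ∀ g, r ∈ (T g).verts)
    (hTg : ∀ g, g.1 ∈ (T g).verts)
    (hTb : ∀ g, (σ g).1 ∈ (T g).verts) :
    Feasible G r (fun q : Fin 2 => if q = 0 then CG else CB)
        (fun e => (CG.attach.filter (fun g => e ∈ (T g).edgeSet)).card) ∧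
      instCost w (fun e => (CG.attach.filter (fun g => e ∈ (T g).edgeSet)).card) ≤
        ∑ g ∈ CG.attach, subgraphCost G w (T g) := by
  classical
  set x : Sym2 V → ℕ := fun e => (CG.attach.filter (fun g => e ∈ (T g).edgeSet)).card with hx
  constructor
  · constructor
    · intro e he
      simp only [hx]
      rw [Finset.card_eq_zero, Finset.filter_eq_empty_iff]
      intro g _ hg
      exact he ((T g).edgeSet_subset hg)
    · intro S hrS i
      -- choose the relevant terminal for each matched pair
      set t : {g // g ∈ CG} → V := fun g => if i = 0 then g.1 else (σ g).1 with ht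
      have htv : ∀ g, t g ∈ (T g).verts := by
        intro g; by_cases h : i = 0 <;> simp [ht, h, hTg, hTb]
      -- each pair whose terminal is in S has a crossing edge of its tree
      have hcross : ∀ g ∈ CG.attach.filter (fun g => t g ∈ S),
          1 ≤ (Finset.univ.filter
            (fun e => Crossing S e ∧ e ∈ (T g).edgeSet)).card := by
        intro g hg
        rw [Finset.mem_filter] at hg
        obtain ⟨a, b, hab, ha, hb⟩ := subgraph_cross' (T g) (hTconn g)
          (S := (↑S : Set V)) (htv g) (hTr g) (by simpa using hg.2)
          (by simpa using hrS)
        refine Finset.card_pos.mpr ⟨s(a, b), ?_⟩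
        simp only [Finset.mem_filter, Finset.mem_univ, true_and]
        exact ⟨⟨a, b, rfl, by simpa using ha, by simpa using hb⟩,
          SimpleGraph.Subgraph.mem_edgeSet.mpr hab⟩
      -- counting
      have hcount : ((if i = 0 then CG else CB) ∩ S).card
          = (CG.attach.filter (fun g => t g ∈ S)).card := by
        by_cases h : i = 0
        · simp only [h, ht, if_pos rfl]
          refine (Finset.card_bij (fun g _ => g.1) ?_ ?_ ?_).symm
          · intro g hg
            rw [Finset.mem_filter] at hg
            simp only [Finset.mem_inter]
            exact ⟨g.2, by simpa using hg.2⟩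
          · intro g₁ _ g₂ _ h12
            exact Subtype.ext h12
          · intro v hv
            rw [Finset.mem_inter] at hv
            exact ⟨⟨v, hv.1⟩, by simp [hv.2], rfl⟩
        · simp only [h, ht, if_neg h]
          refine (Finset.card_bij (fun g _ => (σ g).1) ?_ ?_ ?_).symm
          · intro g hg
            rw [Finset.mem_filter] at hg
            simp only [Finset.mem_inter]
            exact ⟨(σ g).2, by simpa using hg.2⟩
          · intro g₁ _ g₂ _ h12
            exact σ.injective (Subtype.ext h12)
          · intro v hv
            rw [Finset.mem_inter] at hv
            refine ⟨σ.symm ⟨v, hv.1⟩, ?_, by simp⟩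
            simp [hv.2]
      -- swap the double sum
      have hswap : cutCap x S = ∑ g ∈ CG.attach,
          (Finset.univ.filter
            (fun e => Crossing S e ∧ e ∈ (T g).edgeSet)).card := by
        unfold cutCap
        simp only [hx, Finset.card_filter]
        rw [Finset.sum_comm]
        refine Finset.sum_congr rfl fun g _ => ?_
        rw [Finset.sum_filter]
        simp [ite_and]
      rw [hswap]
      calc ((if i = 0 then CG else CB) ∩ S).card
          = ∑ g ∈ CG.attach.filter (fun g => t g ∈ S), 1 := by
            rw [hcount, Finset.sum_const, smul_eq_mul, mul_one]
        _ ≤ ∑ g ∈ CG.attach.filter (fun g => t g ∈ S),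
              (Finset.univ.filter
                (fun e => Crossing S e ∧ e ∈ (T g).edgeSet)).card :=
            Finset.sum_le_sum hcross
        _ ≤ ∑ g ∈ CG.attach,
              (Finset.univ.filter
                (fun e => Crossing S e ∧ e ∈ (T g).edgeSet)).card :=
            Finset.sum_le_sum_of_subset (Finset.filter_subset _ _)
  · refine le_of_eq ?_
    unfold instCost subgraphCost
    simp only [hx, Finset.card_filter, Nat.cast_sum, Finset.mul_sum,
      Finset.sum_filter]
    rw [Finset.sum_comm]
    refine Finset.sum_congr rfl fun g _ => Finset.sum_congr rfl fun e _ => ?_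
    by_cases h : e ∈ (T g).edgeSet <;> simp [h]
end

section
/- Let D be a finite directed multigraph whose edges are each colored green or blue and whose vertex set is partitioned into green terminals, blue terminals and split-vertices, such that: every green (resp. blue) terminal has indegree 0 and outdegree exactly 1, its outgoing edge being green (resp. blue) and pointing to a split-vertex; every split-vertex has indegree exactly 2, with exactly one incoming green and one incoming blue edge; and every split-vertex has outdegree either 0 or 2, and in the latter case exactly one outgoing green and one outgoing blue edge, each pointing to a split-vertex. Then there exists a set of pairwise edge-disjoint S-alternating paths in D such that every terminal is the endpoint of exactly one path in the set; in particular this induces a pairing in which every green terminal is paired with a distinct blue terminal. -/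
/-!
Every edge enters a split-vertex, whose other incoming edge has the other color; an edge leaving
a split-vertex has a sibling of the other color, while the out-edge of a terminal has none.
Swapping an edge with its in-sibling, resp. its out-sibling (fixing terminal out-edges), gives
two involutions of the finite edge set. Applying them alternately to the out-edge of a terminal
traces an `S`-alternating path; since their composite is a permutation, the walk reaches a
fixed point of the second involution, i.e. the out-edge of another terminal, after an odd
number of steps, and as every step changes the color, that terminal has the other color. The
walk from the second terminal retraces the path backwards, and since both involutions are
injective, two such walks sharing an edge start from the same pair of terminals. So the paths
started at the green terminals are edge-disjoint and pair them with the blue terminals.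
-/

open scoped Classical
open Finset

namespace SplitGraph

/-- A finite directed multigraph with edges colored green (`true`) or blue (`false`),
whose vertices are partitioned into green terminals, blue terminals and split-vertices:
vertex type `Vt`, edge type `Et`, source, target and color maps. -/
structure ColoredDigraph (Vt Et : Type) [Fintype Vt] [Fintype Et] where
  src : Et → Vt
  tgt : Et → Vt
  col : Et → Bool
  isGreenT : Vt → Prop
  isBlueT : Vt → Prop
  isSplit : Vt → Prop

variable {Vt Et : Type} [Fintype Vt] [Fintype Et]

/-- `v` is a terminal. -/
def ColoredDigraph.isTerminal (D : ColoredDigraph Vt Et) (v : Vt) : Prop :=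
  D.isGreenT v ∨ D.isBlueT v

/-- The structural conditions of STATEMENT 5 on the colored digraph. -/
def ColoredDigraph.IsSplitGraph (D : ColoredDigraph Vt Et) : Prop :=
  -- the three classes partition the vertex set
  (∀ v : Vt, (D.isGreenT v ∧ ¬D.isBlueT v ∧ ¬D.isSplit v) ∨
    (¬D.isGreenT v ∧ D.isBlueT v ∧ ¬D.isSplit v) ∨
    (¬D.isGreenT v ∧ ¬D.isBlueT v ∧ D.isSplit v)) ∧
  -- terminals have indegree 0 and outdegree 1, the outgoing edge having the terminal's
  -- color and pointing to a split-vertex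
  (∀ v : Vt, D.isTerminal v →
    (∀ e : Et, D.tgt e ≠ v) ∧
    (Finset.univ.filter (fun e : Et => D.src e = v)).card = 1 ∧
    (∀ e : Et, D.src e = v →
      D.isSplit (D.tgt e) ∧ (D.col e = true ↔ D.isGreenT v))) ∧
  -- split-vertices have indegree 2, one incoming green and one incoming blue edge
  (∀ v : Vt, D.isSplit v →
    (Finset.univ.filter (fun e : Et => D.tgt e = v ∧ D.col e = true)).card = 1 ∧
    (Finset.univ.filter (fun e : Et => D.tgt e = v ∧ D.col e = false)).card = 1) ∧
  -- split-vertices have outdegree 0 or 2; in the latter case one outgoing green and one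
  -- outgoing blue edge, each pointing to a split-vertex
  (∀ v : Vt, D.isSplit v →
    (Finset.univ.filter (fun e : Et => D.src e = v)).card = 0 ∨
    ((Finset.univ.filter (fun e : Et => D.src e = v ∧ D.col e = true)).card = 1 ∧
     (Finset.univ.filter (fun e : Et => D.src e = v ∧ D.col e = false)).card = 1 ∧
     (∀ e : Et, D.src e = v → D.isSplit (D.tgt e))))

/-- The data of an `S`-alternating path: endpoints `v`, `w`, the split-vertices
`s_1, …, s_h` it visits, and its edge list `e_0, e_1, …, e_h`, where `e_0` joins `v` and
`s_1`, `e_j` joins `s_j` and `s_{j+1}` for `1 ≤ j ≤ h-1`, and `e_h` joins `w` and `s_h`. -/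
structure AltPath (Vt Et : Type) where
  v : Vt
  w : Vt
  ss : List Vt
  es : List Et

/-- `A` is an `S`-alternating path of `D` (with respect to a default vertex `d0` used
for out-of-range list access): `v` and `w` are terminals of different colors, the `s_i`
are split-vertices, `(v, s_1)` and `(w, s_h)` are directed edges, the edge between `s_j`
and `s_{j+1}` is directed out of the even-indexed one, and for every even `i ≥ 2` the two
directed edges `(s_i, s_{i-1})` and `(s_i, s_{i+1})` have opposite colors. -/
def IsAltPath (D : ColoredDigraph Vt Et) (d0 : Vt) (A : AltPath Vt Et) : Prop :=
  1 ≤ A.ss.length ∧ Odd A.ss.length ∧ A.es.length = A.ss.length + 1 ∧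
  (∀ s ∈ A.ss, D.isSplit s) ∧
  ((D.isGreenT A.v ∧ D.isBlueT A.w) ∨ (D.isBlueT A.v ∧ D.isGreenT A.w)) ∧
  -- e_0 goes from v to s_1, e_h goes from w to s_h
  (∀ e0, A.es.head? = some e0 → D.src e0 = A.v ∧ D.tgt e0 = A.ss.getD 0 d0) ∧
  (∀ eh, A.es.getLast? = some eh →
    D.src eh = A.w ∧ D.tgt eh = A.ss.getD (A.ss.length - 1) d0) ∧
  -- e_j joins s_j and s_{j+1}, directed out of the even-indexed split (1-indexed)
  (∀ j, 1 ≤ j → j ≤ A.ss.length - 1 →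
    ∀ ej, A.es[j]? = some ej →
      if Even j then D.src ej = A.ss.getD (j - 1) d0 ∧ D.tgt ej = A.ss.getD j d0
      else D.src ej = A.ss.getD j d0 ∧ D.tgt ej = A.ss.getD (j - 1) d0) ∧
  -- for even i ≥ 2, the two edges leaving s_i have opposite colors
  (∀ i, Even i → 2 ≤ i → i < A.ss.length →
    ∀ e1 e2, A.es[i - 1]? = some e1 → A.es[i]? = some e2 →
      D.col e1 ≠ D.col e2)

end SplitGraph

open Function

section AltWalk

variable {α : Type*} (σ τ : α → α)

def altWalk (x : α) : ℕ → α
  | 0 => x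
  | n + 1 => (if Even n then σ else τ) (altWalk x n)

-- `0` if the walk never reaches a fixed point of `τ` at an odd index
noncomputable def altWalkLen (x : α) : ℕ := sInf {k | Odd k ∧ IsFixedPt τ (altWalk σ τ x k)}

variable {σ τ} {x : α}

lemma altWalk_succ (n : ℕ) :
    altWalk σ τ x (n + 1) = (if Even n then σ else τ) (altWalk σ τ x n) := rfl

lemma altWalk_succ_of_even {n : ℕ} (hn : Even n) :
    altWalk σ τ x (n + 1) = σ (altWalk σ τ x n) := by
  simp [altWalk_succ, hn]

lemma altWalk_succ_of_odd {n : ℕ} (hn : Odd n) :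
    altWalk σ τ x (n + 1) = τ (altWalk σ τ x n) := by
  simp [altWalk_succ, Nat.not_even_iff_odd.2 hn]

lemma altWalk_two_mul_add_one (k : ℕ) : altWalk σ τ x (2 * k + 1) = (σ ∘ τ)^[k] (σ x) := by
  induction k with
  | zero => exact altWalk_succ_of_even Even.zero
  | succ k ih =>
    rw [iterate_succ_apply', ← ih, show 2 * (k + 1) + 1 = 2 * k + 1 + 1 + 1 by ring,
      altWalk_succ_of_even (by simp [parity_simps]), altWalk_succ_of_odd (by simp)]
    rfl

lemma not_isFixedPt_altWalk_of_odd {k : ℕ} (hk : Odd k) (hkL : k < altWalkLen σ τ x) :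
    ¬IsFixedPt τ (altWalk σ τ x k) :=
  fun h => Nat.notMem_of_lt_sInf hkL ⟨hk, h⟩

variable (hσ : Involutive σ) (hτ : Involutive τ)
include hσ hτ

lemma altWalk_eq_apply_altWalk_succ (n : ℕ) :
    altWalk σ τ x n = (if Even n then σ else τ) (altWalk σ τ x (n + 1)) := by
  rw [altWalk_succ]; split_ifs
  exacts [(hσ _).symm, (hτ _).symm]

lemma altWalk_sub_eq_of_altWalk_eq {x' : α} {i j m : ℕ} (hij : Even i ↔ Even j)
    (heq : altWalk σ τ x i = altWalk σ τ x' j) (hmi : m ≤ i) (hmj : m ≤ j) :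
    altWalk σ τ x (i - m) = altWalk σ τ x' (j - m) := by
  induction m with
  | zero => exact heq
  | succ m ih =>
    have hpar : Even (i - (m + 1)) ↔ Even (j - (m + 1)) := by
      rw [Nat.even_sub hmi, Nat.even_sub hmj, hij]
    rw [altWalk_eq_apply_altWalk_succ hσ hτ (i - (m + 1)),
      altWalk_eq_apply_altWalk_succ hσ hτ (j - (m + 1))]
    simp only [hpar, show i - (m + 1) + 1 = i - m by omega, show j - (m + 1) + 1 = j - m by omega,
      ih (by omega) (by omega)]

variable [Finite α] (hx : IsFixedPt τ x)
include hx

lemma exists_odd_isFixedPt_altWalk : ∃ k, Odd k ∧ IsFixedPt τ (altWalk σ τ x k) := by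
  obtain ⟨p, hp, hper⟩ := (hσ.injective.comp hτ.injective).mem_periodicPts (σ x)
  -- the odd-indexed terms come back to `σ x`, so the walk comes back to `x` at index `2p - 1`
  have h2p : altWalk σ τ x (2 * p) = x := hσ.injective <| by
    rw [← altWalk_succ_of_even (σ := σ) (τ := τ) (x := x) (even_two_mul p),
      altWalk_two_mul_add_one]
    exact hper
  refine ⟨2 * p - 1, by grind, ?_⟩
  have := altWalk_eq_apply_altWalk_succ hσ hτ (x := x) (2 * p - 1)
  rw [if_neg (by grind), Nat.sub_add_cancel (by omega), h2p] at this
  rw [IsFixedPt, this, hx, hx]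

lemma altWalkLen_spec :
    Odd (altWalkLen σ τ x) ∧ IsFixedPt τ (altWalk σ τ x (altWalkLen σ τ x)) :=
  Nat.sInf_mem (exists_odd_isFixedPt_altWalk hσ hτ hx)

lemma isFixedPt_altWalk_iff {k : ℕ} (hk : k ≤ altWalkLen σ τ x) :
    IsFixedPt τ (altWalk σ τ x k) ↔ k = 0 ∨ k = altWalkLen σ τ x := by
  refine ⟨fun hfix => ?_, ?_⟩
  · by_contra! hne
    have hlt : k < altWalkLen σ τ x := lt_of_le_of_ne hk hne.2
    rcases Nat.even_or_odd k with heven | hodd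
    · -- at an even index, a fixed point of `τ` repeats the previous, odd-indexed term
      obtain ⟨m, rfl⟩ : ∃ m, k = m + 1 := Nat.exists_eq_succ_of_ne_zero hne.1
      have hm : Odd m := by simpa [parity_simps] using heven
      rw [altWalk_succ_of_odd hm, IsFixedPt, hτ] at hfix
      exact not_isFixedPt_altWalk_of_odd hm (by omega) hfix.symm
    · exact not_isFixedPt_altWalk_of_odd hodd hlt hfix
  · rintro (rfl | rfl)
    exacts [hx, (altWalkLen_spec hσ hτ hx).2]

lemma altWalk_altWalkLen_sub {k : ℕ} (hk : k ≤ altWalkLen σ τ x) :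
    altWalk σ τ (altWalk σ τ x (altWalkLen σ τ x)) k =
      altWalk σ τ x (altWalkLen σ τ x - k) := by
  have hL := (altWalkLen_spec hσ hτ hx).1
  induction k with
  | zero => rfl
  | succ k ih =>
    have hpar : Even (altWalkLen σ τ x - (k + 1)) ↔ Even k := by
      rw [Nat.even_sub hk]; simp [parity_simps, Nat.not_even_iff_odd.2 hL]
    rw [altWalk_succ, ih (by omega),
      altWalk_eq_apply_altWalk_succ hσ hτ (altWalkLen σ τ x - (k + 1))]
    simp only [hpar, show altWalkLen σ τ x - (k + 1) + 1 = altWalkLen σ τ x - k by omega]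

lemma altWalk_apply_eq_iff_even (c : α → Bool) (hcσ : ∀ a, c (σ a) ≠ c a)
    (hcτ : ∀ a, ¬IsFixedPt τ a → c (τ a) ≠ c a) {k : ℕ}
    (hk : k ≤ altWalkLen σ τ x) :
    c (altWalk σ τ x k) = c x ↔ Even k := by
  induction k with
  | zero => exact iff_of_true rfl Even.zero
  | succ k ih =>
    have hstep : c (altWalk σ τ x (k + 1)) ≠ c (altWalk σ τ x k) := by
      rcases Nat.even_or_odd k with hk' | hk'
      · rw [altWalk_succ_of_even hk']; exact hcσ _
      · rw [altWalk_succ_of_odd hk']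
        refine hcτ _ fun hfix => ?_
        rcases (isFixedPt_altWalk_iff hσ hτ hx (by omega)).1 hfix with h | h
        · exact Nat.not_even_iff_odd.2 hk' (h ▸ Even.zero)
        · omega
    rw [Bool.eq_not.2 hstep, Nat.even_add_one, ← ih (by omega)]
    exact Bool.not_eq

lemma altWalkLen_altWalk_altWalkLen :
    altWalkLen σ τ (altWalk σ τ x (altWalkLen σ τ x)) = altWalkLen σ τ x := by
  set L := altWalkLen σ τ x
  obtain ⟨hL, hy⟩ := altWalkLen_spec hσ hτ hx
  have hle : altWalkLen σ τ (altWalk σ τ x L) ≤ L :=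
    Nat.sInf_le ⟨hL, by rw [altWalk_altWalkLen_sub hσ hτ hx le_rfl, Nat.sub_self]; exact hx⟩
  obtain ⟨hL', hy'⟩ := altWalkLen_spec hσ hτ hy
  rw [altWalk_altWalkLen_sub hσ hτ hx hle,
    isFixedPt_altWalk_iff hσ hτ hx (Nat.sub_le _ _)] at hy'
  grind

lemma eq_of_altWalk_eq_of_even_iff {x' : α} (hx' : IsFixedPt τ x') {i j : ℕ}
    (hi : i ≤ altWalkLen σ τ x) (hj : j ≤ altWalkLen σ τ x') (hij : Even i ↔ Even j)
    (heq : altWalk σ τ x i = altWalk σ τ x' j) : x = x' := by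
  wlog hle : i ≤ j generalizing x x' i j
  · exact (this hx' hx hj hi hij.symm heq.symm (by omega)).symm
  have h0 := altWalk_sub_eq_of_altWalk_eq hσ hτ hij heq le_rfl hle
  rw [Nat.sub_self] at h0
  have hfix : IsFixedPt τ (altWalk σ τ x' (j - i)) := h0 ▸ hx
  rw [isFixedPt_altWalk_iff hσ hτ hx' (by omega)] at hfix
  have heven : Even (j - i) := (Nat.even_sub hle).2 hij.symm
  have hji : j - i = 0 := hfix.resolve_right fun h =>
    Nat.not_even_iff_odd.2 (h ▸ (altWalkLen_spec hσ hτ hx').1) heven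
  rw [hji] at h0
  exact h0

lemma eq_or_eq_of_altWalk_eq {x' : α} (hx' : IsFixedPt τ x') {i j : ℕ}
    (hi : i ≤ altWalkLen σ τ x) (hj : j ≤ altWalkLen σ τ x')
    (heq : altWalk σ τ x i = altWalk σ τ x' j) :
    x = x' ∨ x = altWalk σ τ x' (altWalkLen σ τ x') := by
  by_cases hij : Even i ↔ Even j
  · exact .inl (eq_of_altWalk_eq_of_even_iff hσ hτ hx hx' hi hj hij heq)
  · -- read the walk from `x'` backwards, from its other end
    right
    obtain ⟨hL', hy'⟩ := altWalkLen_spec hσ hτ hx'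
    refine eq_of_altWalk_eq_of_even_iff hσ hτ hx hy' hi
      (j := altWalkLen σ τ x' - j)
      (by rw [altWalkLen_altWalk_altWalkLen hσ hτ hx']; omega) ?_ ?_
    · rw [Nat.even_sub hj]; simp only [Nat.not_even_iff_odd.2 hL', false_iff]; tauto
    · rw [altWalk_altWalkLen_sub hσ hτ hx' (by omega), Nat.sub_sub_self hj, heq]

end AltWalk

namespace SplitGraph

variable {Vt Et : Type} [Fintype Vt] [Fintype Et]

namespace ColoredDigraph

variable (D : ColoredDigraph Vt Et)

-- `D.partner D.tgt` swaps the two edges entering a split-vertex, `D.partner D.src` the two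
-- edges leaving one; an edge without a partner is fixed
noncomputable def partner (f : Et → Vt) (e : Et) : Et :=
  if h : ∃ e', f e' = f e ∧ D.col e' ≠ D.col e then h.choose else e

local notation "walk" => altWalk (D.partner D.tgt) (D.partner D.src)
local notation "walkLen" => altWalkLen (D.partner D.tgt) (D.partner D.src)

-- `s_{k+1}` is the common target of `e_k, e_{k+1}` for even `k`, their common source for odd `k`
noncomputable def altPath (x : Et) : AltPath Vt Et where
  v := D.src x
  w := D.src (walk x (walkLen x))
  ss := (List.range (walkLen x)).map fun k =>
    if Even k then D.tgt (walk x k) else D.src (walk x k)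
  es := (List.range (walkLen x + 1)).map (walk x)

variable {D}

lemma partner_spec {f : Et → Vt} {e : Et} (h : ∃ e', f e' = f e ∧ D.col e' ≠ D.col e) :
    f (D.partner f e) = f e ∧ D.col (D.partner f e) ≠ D.col e := by
  rw [partner, dif_pos h]
  exact h.choose_spec

lemma map_partner (f : Et → Vt) (e : Et) : f (D.partner f e) = f e := by
  by_cases h : ∃ e', f e' = f e ∧ D.col e' ≠ D.col e
  · exact (partner_spec h).1
  · rw [partner, dif_neg h]

lemma isFixedPt_partner_iff {f : Et → Vt} {e : Et} :
    IsFixedPt (D.partner f) e ↔ ¬∃ e', f e' = f e ∧ D.col e' ≠ D.col e := by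
  refine ⟨fun hfix h => (partner_spec h).2 (congrArg D.col hfix), fun h => ?_⟩
  rw [IsFixedPt, partner, dif_neg h]

lemma partner_involutive {f : Et → Vt} (hf : Injective fun e => (f e, D.col e)) :
    Involutive (D.partner f) := by
  intro e
  by_cases h : ∃ e', f e' = f e ∧ D.col e' ≠ D.col e
  · obtain ⟨hfe, hce⟩ := partner_spec h
    obtain ⟨hfe', hce'⟩ := partner_spec ⟨e, hfe.symm, hce.symm⟩
    refine hf (Prod.ext (hfe'.trans hfe) (show D.col _ = D.col e from ?_))
    rw [Bool.eq_not.2 hce', Bool.eq_not.2 hce, Bool.not_not]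
  · rw [isFixedPt_partner_iff.2 h, isFixedPt_partner_iff.2 h]

lemma altPath_ss_getD (x : Et) (d0 : Vt) {k : ℕ} (hk : k < walkLen x) :
    (D.altPath x).ss.getD k d0 = if Even k then D.tgt (walk x k) else D.src (walk x k) := by
  simp [altPath, List.getD_eq_getElem?_getD, List.getElem?_range hk]

lemma altPath_es_getElem? (x : Et) {j : ℕ} (hj : j ≤ walkLen x) :
    (D.altPath x).es[j]? = some (walk x j) := by
  simp [altPath, List.getElem?_range (Nat.lt_succ_of_le hj)]

lemma tgt_altWalk_succ_of_even (x : Et) {k : ℕ} (hk : Even k) :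
    D.tgt (walk x (k + 1)) = D.tgt (walk x k) := by
  rw [altWalk_succ_of_even hk]; exact map_partner _ _

lemma src_altWalk_succ_of_odd (x : Et) {k : ℕ} (hk : Odd k) :
    D.src (walk x (k + 1)) = D.src (walk x k) := by
  rw [altWalk_succ_of_odd hk]; exact map_partner _ _

lemma altPath_inner_edges (x : Et) (d0 : Vt) :
    ∀ j, 1 ≤ j → j ≤ (D.altPath x).ss.length - 1 → ∀ e, (D.altPath x).es[j]? = some e →
      if Even j then D.src e = (D.altPath x).ss.getD (j - 1) d0 ∧
        D.tgt e = (D.altPath x).ss.getD j d0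
      else D.src e = (D.altPath x).ss.getD j d0 ∧
        D.tgt e = (D.altPath x).ss.getD (j - 1) d0 := by
  intro j hj1 hj2 e he
  simp only [altPath, List.length_map, List.length_range] at hj2
  rw [altPath_es_getElem? _ (by omega)] at he
  obtain rfl := Option.some.inj he
  obtain ⟨i, rfl⟩ : ∃ i, j = i + 1 := ⟨j - 1, by omega⟩
  rw [Nat.add_sub_cancel, altPath_ss_getD _ _ (by omega), altPath_ss_getD _ _ (by omega)]
  rcases Nat.even_or_odd i with hi | hi
  · simp only [Nat.even_add_one, hi, not_true, if_false, if_true, true_and]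
    exact tgt_altWalk_succ_of_even x hi
  · simp only [Nat.even_add_one, Nat.not_even_iff_odd.2 hi, not_false_eq_true, if_true,
      if_false, and_true]
    exact src_altWalk_succ_of_odd x hi

namespace IsSplitGraph

variable (hD : D.IsSplitGraph)
include hD

lemma isSplit_iff_not_isTerminal {v : Vt} : D.isSplit v ↔ ¬D.isTerminal v := by
  unfold isTerminal; rcases hD.1 v with h | h | h <;> tauto

lemma existsUnique_src {t : Vt} (ht : D.isTerminal t) : ∃! e, D.src e = t :=
  (Fintype.existsUnique_iff_card_one _).2 (hD.2.1 t ht).2.1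

lemma existsUnique_src_col {e : Et} (hs : D.isSplit (D.src e)) (c : Bool) :
    ∃! e', D.src e' = D.src e ∧ D.col e' = c := by
  obtain ⟨hg, hb, -⟩ := (hD.2.2.2 _ hs).resolve_left
    (Finset.card_ne_zero_of_mem (Finset.mem_filter.2 ⟨Finset.mem_univ e, rfl⟩))
  rw [Fintype.existsUnique_iff_card_one]
  cases c
  exacts [hb, hg]

lemma isSplit_tgt (e : Et) : D.isSplit (D.tgt e) := by
  by_cases hs : D.isTerminal (D.src e)
  · exact ((hD.2.1 _ hs).2.2 e rfl).1
  · have hs' := (hD.isSplit_iff_not_isTerminal).2 hs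
    exact ((hD.2.2.2 _ hs').resolve_left
      (Finset.card_ne_zero_of_mem (Finset.mem_filter.2 ⟨Finset.mem_univ e, rfl⟩))).2.2 e rfl

lemma existsUnique_tgt_col (e : Et) (c : Bool) : ∃! e', D.tgt e' = D.tgt e ∧ D.col e' = c := by
  have h := hD.2.2.1 _ (hD.isSplit_tgt e)
  rw [Fintype.existsUnique_iff_card_one]
  cases c
  exacts [h.2, h.1]

lemma partner_tgt_involutive : Involutive (D.partner D.tgt) :=
  partner_involutive fun a _ hab =>
    (hD.existsUnique_tgt_col a (D.col a)).unique ⟨rfl, rfl⟩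
      ⟨(congrArg Prod.fst hab).symm, (congrArg Prod.snd hab).symm⟩

lemma partner_src_involutive : Involutive (D.partner D.src) := by
  refine partner_involutive fun a _ hab => ?_
  obtain ⟨hs, hc⟩ := Prod.ext_iff.1 hab
  by_cases ha : D.isTerminal (D.src a)
  · exact (hD.existsUnique_src ha).unique rfl hs.symm
  · exact (hD.existsUnique_src_col ((hD.isSplit_iff_not_isTerminal).2 ha) (D.col a)).unique
      ⟨rfl, rfl⟩ ⟨hs.symm, hc.symm⟩

lemma col_partner_tgt_ne (e : Et) : D.col (D.partner D.tgt e) ≠ D.col e := by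
  obtain ⟨e', he', hc⟩ := (hD.existsUnique_tgt_col e (!D.col e)).exists
  exact (partner_spec ⟨e', he', by simp [hc]⟩).2

lemma col_partner_src_ne {e : Et} (hs : D.isSplit (D.src e)) :
    D.col (D.partner D.src e) ≠ D.col e := by
  obtain ⟨e', he', hc⟩ := (hD.existsUnique_src_col hs (!D.col e)).exists
  exact (partner_spec ⟨e', he', by simp [hc]⟩).2

lemma isFixedPt_partner_src_iff {e : Et} :
    IsFixedPt (D.partner D.src) e ↔ D.isTerminal (D.src e) := by
  refine ⟨fun hfix => by_contra fun hnt => ?_, fun ht => isFixedPt_partner_iff.2 ?_⟩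
  · exact hD.col_partner_src_ne ((hD.isSplit_iff_not_isTerminal).2 hnt) (congrArg D.col hfix)
  · -- a terminal has a single outgoing edge
    rintro ⟨e', hs, hc⟩
    exact hc (congrArg D.col ((hD.existsUnique_src ht).unique hs rfl))

section
variable {x : Et} (hx : D.isTerminal (D.src x))
include hx

lemma isFixedPt_partner_src : IsFixedPt (D.partner D.src) x := (hD.isFixedPt_partner_src_iff).2 hx

lemma isTerminal_src_altWalk_altWalkLen : D.isTerminal (D.src (walk x (walkLen x))) :=
  (hD.isFixedPt_partner_src_iff).1 (altWalkLen_spec hD.partner_tgt_involutive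
    hD.partner_src_involutive (hD.isFixedPt_partner_src hx)).2

lemma isSplit_src_altWalk {k : ℕ} (hk0 : k ≠ 0) (hk : k < walkLen x) :
    D.isSplit (D.src (walk x k)) := by
  rw [hD.isSplit_iff_not_isTerminal, ← hD.isFixedPt_partner_src_iff,
    isFixedPt_altWalk_iff hD.partner_tgt_involutive hD.partner_src_involutive
      (hD.isFixedPt_partner_src hx) hk.le]
  omega

lemma isGreenT_src_altWalk_altWalkLen_iff :
    D.isGreenT (D.src (walk x (walkLen x))) ↔ ¬D.isGreenT (D.src x) := by
  have hL := (altWalkLen_spec hD.partner_tgt_involutive hD.partner_src_involutive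
    (hD.isFixedPt_partner_src hx)).1
  have hcol := altWalk_apply_eq_iff_even hD.partner_tgt_involutive hD.partner_src_involutive
    (hD.isFixedPt_partner_src hx) D.col hD.col_partner_tgt_ne
    (fun e he => hD.col_partner_src_ne ((hD.isSplit_iff_not_isTerminal).2
      (mt (hD.isFixedPt_partner_src_iff).2 he))) le_rfl
  rw [← ((hD.2.1 _ (hD.isTerminal_src_altWalk_altWalkLen hx)).2.2 _ rfl).2,
    ← ((hD.2.1 _ hx).2.2 _ rfl).2, Bool.eq_not.2 (mt hcol.1 (Nat.not_even_iff_odd.2 hL))]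
  exact Bool.not_eq

lemma isAltPath_altPath (d0 : Vt) : IsAltPath D d0 (D.altPath x) := by
  have hL := (altWalkLen_spec hD.partner_tgt_involutive hD.partner_src_involutive
    (hD.isFixedPt_partner_src hx)).1
  have hss : (D.altPath x).ss.length = walkLen x := by simp [altPath]
  have hes : (D.altPath x).es.length = walkLen x + 1 := by simp [altPath]
  refine ⟨hss ▸ hL.pos, hss ▸ hL, by rw [hss, hes], ?_, ?_, ?_, ?_, ?_, ?_⟩
  · simp only [altPath, List.mem_map, List.mem_range]
    rintro _ ⟨k, hk, rfl⟩
    split_ifs with he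
    · exact hD.isSplit_tgt _
    · exact hD.isSplit_src_altWalk hx (by rintro rfl; exact he Even.zero) hk
  · have hw := hD.isTerminal_src_altWalk_altWalkLen hx
    have hgw := hD.isGreenT_src_altWalk_altWalkLen_iff hx
    by_cases hg : D.isGreenT (D.src x)
    · exact .inl ⟨hg, hw.resolve_left (hgw.not_left.2 hg)⟩
    · exact .inr ⟨hx.resolve_left hg, hgw.2 hg⟩
  · intro e he
    rw [List.head?_eq_getElem?, altPath_es_getElem? _ (Nat.zero_le _)] at he
    obtain rfl := Option.some.inj he
    exact ⟨rfl, by rw [altPath_ss_getD _ _ hL.pos, if_pos Even.zero]⟩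
  · intro e he
    rw [List.getLast?_eq_getElem?, hes, Nat.add_sub_cancel, altPath_es_getElem? _ le_rfl] at he
    obtain rfl := Option.some.inj he
    refine ⟨rfl, ?_⟩
    have heven : Even (walkLen x - 1) := Nat.Odd.sub_odd hL odd_one
    rw [hss, altPath_ss_getD _ _ (Nat.sub_lt hL.pos one_pos), if_pos heven,
      ← tgt_altWalk_succ_of_even x heven, Nat.sub_add_cancel hL.pos]
  · exact altPath_inner_edges x d0
  · intro i hi hi2 hiL e1 e2 he1 he2
    rw [hss] at hiL
    rw [altPath_es_getElem? _ (by omega)] at he1 he2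
    obtain rfl := Option.some.inj he1
    obtain rfl := Option.some.inj he2
    have hodd : Odd (i - 1) := Nat.Even.sub_odd (by omega) hi odd_one
    rw [← Nat.sub_add_cancel (by omega : 1 ≤ i), altWalk_succ_of_odd hodd]
    exact (hD.col_partner_src_ne (hD.isSplit_src_altWalk hx (by omega) (by omega))).symm

end

noncomputable def outEdge {t : Vt} (ht : D.isTerminal t) : Et :=
  (hD.existsUnique_src ht).exists.choose

variable {t : Vt} (ht : D.isTerminal t)

lemma src_outEdge : D.src (hD.outEdge ht) = t :=
  (hD.existsUnique_src ht).exists.choose_spec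

lemma eq_outEdge {e : Et} (he : D.src e = t) : e = hD.outEdge ht :=
  (hD.existsUnique_src ht).unique he (hD.src_outEdge ht)

noncomputable def altPathFrom : AltPath Vt Et := D.altPath (hD.outEdge ht)

lemma isTerminal_src_outEdge : D.isTerminal (D.src (hD.outEdge ht)) :=
  (hD.src_outEdge ht).symm ▸ ht

lemma isAltPath_altPathFrom (d0 : Vt) : IsAltPath D d0 (hD.altPathFrom ht) :=
  hD.isAltPath_altPath (hD.isTerminal_src_outEdge ht) d0

lemma altPathFrom_v : (hD.altPathFrom ht).v = t := hD.src_outEdge ht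

lemma isTerminal_altPathFrom_w : D.isTerminal (hD.altPathFrom ht).w :=
  hD.isTerminal_src_altWalk_altWalkLen (hD.isTerminal_src_outEdge ht)

lemma isGreenT_altPathFrom_w_iff : D.isGreenT (hD.altPathFrom ht).w ↔ ¬D.isGreenT t := by
  have h := hD.isGreenT_src_altWalk_altWalkLen_iff (hD.isTerminal_src_outEdge ht)
  rwa [hD.src_outEdge ht] at h

lemma isBlueT_altPathFrom_w (hg : D.isGreenT t) : D.isBlueT (hD.altPathFrom ht).w :=
  (hD.isTerminal_altPathFrom_w ht).resolve_left ((hD.isGreenT_altPathFrom_w_iff ht).not_left.2 hg)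

lemma altPathFrom_w_eq_symm {s : Vt} (hs : D.isTerminal s) (h : (hD.altPathFrom ht).w = s) :
    (hD.altPathFrom hs).w = t := by
  subst h
  have hx := hD.isFixedPt_partner_src (hD.isTerminal_src_outEdge ht)
  have hy : hD.outEdge hs = walk (hD.outEdge ht) (walkLen (hD.outEdge ht)) :=
    (hD.eq_outEdge hs rfl).symm
  change D.src (walk (hD.outEdge hs) (walkLen (hD.outEdge hs))) = t
  rw [hy, altWalkLen_altWalk_altWalkLen hD.partner_tgt_involutive hD.partner_src_involutive hx,
    altWalk_altWalkLen_sub hD.partner_tgt_involutive hD.partner_src_involutive hx le_rfl,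
    Nat.sub_self]
  exact hD.src_outEdge ht

lemma eq_of_altPathFrom_w_eq {t' : Vt} (ht' : D.isTerminal t')
    (h : (hD.altPathFrom ht).w = (hD.altPathFrom ht').w) : t = t' :=
  (hD.altPathFrom_w_eq_symm ht (hD.isTerminal_altPathFrom_w ht') h).symm.trans
    (hD.altPathFrom_w_eq_symm ht' _ rfl)

lemma eq_or_eq_altPathFrom_w_of_mem_es {t' : Vt} (ht' : D.isTerminal t') {e : Et}
    (he : e ∈ (hD.altPathFrom ht).es) (he' : e ∈ (hD.altPathFrom ht').es) :
    t = t' ∨ t = (hD.altPathFrom ht').w := by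
  simp only [altPathFrom, altPath, List.mem_map, List.mem_range, Nat.lt_succ_iff] at he he'
  obtain ⟨i, hi, rfl⟩ := he
  obtain ⟨j, hj, heq⟩ := he'
  have h := eq_or_eq_of_altWalk_eq hD.partner_tgt_involutive hD.partner_src_involutive
    (hD.isFixedPt_partner_src (hD.isTerminal_src_outEdge ht))
    (hD.isFixedPt_partner_src (hD.isTerminal_src_outEdge ht')) hi hj heq.symm
  refine h.imp (fun h => ?_) (fun h => ?_)
  · rw [← hD.src_outEdge ht, h, hD.src_outEdge ht']
  · rw [← hD.src_outEdge ht, h]; rfl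

lemma existsUnique_altPathFrom_endpoint (ht : D.isTerminal t) :
    ∃! g : {v // D.isGreenT v},
      (hD.altPathFrom (Or.inl g.2)).v = t ∨ (hD.altPathFrom (Or.inl g.2)).w = t := by
  by_cases hg : D.isGreenT t
  · refine ⟨⟨t, hg⟩, .inl (hD.altPathFrom_v _), ?_⟩
    rintro ⟨g, hg'⟩ (h | h)
    · exact Subtype.ext ((hD.altPathFrom_v _).symm.trans h)
    · exact absurd hg' ((hD.isGreenT_altPathFrom_w_iff _).1 (h ▸ hg))
  · have hs := (hD.isGreenT_altPathFrom_w_iff ht).2 hg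
    refine ⟨⟨_, hs⟩, .inr (hD.altPathFrom_w_eq_symm ht _ rfl), ?_⟩
    rintro ⟨g, hg'⟩ (h | h)
    · exact absurd ((hD.altPathFrom_v _).symm.trans h ▸ hg') hg
    · exact Subtype.ext (hD.altPathFrom_w_eq_symm _ ht h).symm

end IsSplitGraph
end ColoredDigraph
end SplitGraph

open SplitGraph in
/-- in any colored directed multigraph with the split-graph structure, there
is a set of pairwise edge-disjoint `S`-alternating paths such that every terminal is the
endpoint of exactly one path of the set; in particular this pairs every green terminal
with a distinct blue terminal. -/
theorem stmt_5 {Vt Et : Type} [Fintype Vt] [Fintype Et]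
    (D : ColoredDigraph Vt Et) (hD : D.IsSplitGraph) (d0 : Vt) :
    ∃ (n : ℕ) (A : Fin n → AltPath Vt Et),
      (∀ i, IsAltPath D d0 (A i)) ∧
      (∀ i j, i ≠ j → ∀ e ∈ (A i).es, e ∉ (A j).es) ∧
      (∀ t : Vt, D.isTerminal t →
        (Finset.univ.filter (fun i : Fin n => (A i).v = t ∨ (A i).w = t)).card = 1) ∧
      ∃ f : {v : Vt // D.isGreenT v} → {v : Vt // D.isBlueT v},
        Function.Injective f ∧
        ∀ g : {v : Vt // D.isGreenT v}, ∃ i,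
          ((A i).v = g.1 ∧ (A i).w = (f g).1) ∨ ((A i).v = (f g).1 ∧ (A i).w = g.1) := by
  let eqv := Fintype.equivFin {v : Vt // D.isGreenT v}
  let P (g : {v : Vt // D.isGreenT v}) : AltPath Vt Et := hD.altPathFrom (Or.inl g.2)
  refine ⟨_, fun i => P (eqv.symm i), fun i => hD.isAltPath_altPathFrom _ d0, ?_,
    fun t ht => ?_, ?_⟩
  · intro i j hij e hei hej
    rcases hD.eq_or_eq_altPathFrom_w_of_mem_es _ _ hei hej with h | h
    · exact hij (eqv.symm.injective (Subtype.ext h))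
    · exact (hD.isGreenT_altPathFrom_w_iff _).1 (h ▸ (eqv.symm i).2) (eqv.symm j).2
  · exact (Fintype.existsUnique_iff_card_one _).1
      (eqv.existsUnique_congr_left.1 (hD.existsUnique_altPathFrom_endpoint ht))
  · refine ⟨fun g => ⟨(P g).w, hD.isBlueT_altPathFrom_w _ g.2⟩,
      fun g g' h => Subtype.ext (hD.eq_of_altPathFrom_w_eq _ _ (congrArg Subtype.val h)),
      fun g => ⟨eqv g, .inl ⟨?_, by simp [P]⟩⟩⟩
    simpa [P] using hD.altPathFrom_v _
end

section
/- If the SAT formula (in which every variable occurs in exactly 3 clauses, exactly one occurrence being negated) is satisfiable, then the constructed two-color f-SAND instance admits a feasible capacity installation of cost at most (M+2)·m + 8p. -/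
open scoped Classical
open Finset

namespace SandSat

/-- Vertices of the reduction graph: the root, one node `k_j` per clause, and seven
nodes `y_i^1, …, y_i^7` per variable (indexed here by `Fin 7`, so `y_i^ℓ` has index
`ℓ - 1`). -/
abbrev SandV (m p : ℕ) := Option (Fin m ⊕ (Fin p × Fin 7))

variable {m p : ℕ}

/-- The root. -/
def rt : SandV m p := none
/-- The clause node `k_j`. -/
def kv (j : Fin m) : SandV m p := some (Sum.inl j)
/-- The variable node `y_i^{ℓ+1}`. -/
def yv (i : Fin p) (ℓ : Fin 7) : SandV m p := some (Sum.inr (i, ℓ))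

/-- The SAT formula, given by the clause indices `i1 i, i2 i` of the two positive
occurrences and `i3 i` of the negated occurrence of each variable `x_i`, is
satisfiable. -/
def Satisfiable (i1 i2 i3 : Fin p → Fin m) : Prop :=
  ∃ a : Fin p → Bool, ∀ j : Fin m,
    (∃ i, (i1 i = j ∨ i2 i = j) ∧ a i = true) ∨ (∃ i, i3 i = j ∧ a i = false)

/-- The edges `{r, y_i^1}, {r, y_i^3}, {r, y_i^5}, {r, y_i^7}` (cost 2). -/
def RootEdge (e : Sym2 (SandV m p)) : Prop :=
  ∃ i, e = s(rt, yv i 0) ∨ e = s(rt, yv i 2) ∨ e = s(rt, yv i 4) ∨ e = s(rt, yv i 6)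

/-- The edges `{y_i^ℓ, y_i^{ℓ+1}}`, `ℓ = 1, …, 6` (cost 1). -/
def PathEdge (e : Sym2 (SandV m p)) : Prop :=
  ∃ i, e = s(yv i 0, yv i 1) ∨ e = s(yv i 1, yv i 2) ∨ e = s(yv i 2, yv i 3) ∨
    e = s(yv i 3, yv i 4) ∨ e = s(yv i 4, yv i 5) ∨ e = s(yv i 5, yv i 6)

/-- The edges `{y_i^2, k_{i_1}}, {y_i^4, k_{i_3}}, {y_i^6, k_{i_2}}` (cost `M`). -/
def CrossEdge (i1 i2 i3 : Fin p → Fin m) (e : Sym2 (SandV m p)) : Prop :=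
  ∃ i, e = s(yv i 1, kv (i1 i)) ∨ e = s(yv i 3, kv (i3 i)) ∨ e = s(yv i 5, kv (i2 i))

/-- The reduction graph. -/
def sandG (i1 i2 i3 : Fin p → Fin m) : SimpleGraph (SandV m p) :=
  SimpleGraph.fromEdgeSet
    {e | RootEdge e ∨ PathEdge e ∨ CrossEdge i1 i2 i3 e}

/-- The edge costs of the reduction graph. -/
noncomputable def sandW (M : ℝ) (i1 i2 i3 : Fin p → Fin m) :
    Sym2 (SandV m p) → ℝ := fun e =>
  if RootEdge e then 2
  else if PathEdge e then 1
  else if CrossEdge i1 i2 i3 e then M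
  else 0

/-- The two colors: `C_1` consists of all clause nodes together with the `y_i^1, y_i^5`,
and `C_2` of all clause nodes together with the `y_i^3, y_i^7`. -/
def sandC (q : Fin 2) : Finset (SandV m p) :=
  (Finset.univ.image kv) ∪
    (if q = 0 then
      Finset.univ.image (fun i => yv i 0) ∪ Finset.univ.image (fun i => yv i 4)
    else
      Finset.univ.image (fun i => yv i 2) ∪ Finset.univ.image (fun i => yv i 6))

/-- Finset of cost-`M` edges. -/
noncomputable def crossE (i1 i2 i3 : Fin p → Fin m) : Finset (Sym2 (SandV m p)) :=
  Finset.univ.filter (CrossEdge i1 i2 i3)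

end SandSat

/-!
Fix a satisfying assignment and, for every clause `k_j`, a true literal of it, say the occurrence
of `x_i` whose cross edge ends at `y_i^ℓ`. Install one unit on the four root edges of every
gadget (cost `8p`) and, per clause, on its cross edge and the two path edges at `y_i^ℓ`
(cost `M + 2`). In color `q`, a terminal `y` uses its own root edge, and `k_j` the path
`k_j, y_i^ℓ, y_i^{ℓ±1}, r` through the neighbour `y_i^{ℓ±1}` that is a terminal of the other color.
Routes of one color are edge-disjoint: two clauses can only meet at a common exit of one gadget,
which happens only for opposite literals of the same variable, never both true. So every cut
`S ∌ r` is crossed by a distinct installed edge for each terminal in `S`.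
-/

namespace FSand

section Cut

variable {V : Type} [Fintype V] [DecidableEq V]

theorem card_inter_le_cutCap (x : Sym2 V → ℕ) {r : V} {C S : Finset V}
    (P : V → Set (Sym2 V)) (hreach : ∀ v ∈ C, (SimpleGraph.fromEdgeSet (P v)).Reachable v r)
    (hdisj : (C : Set V).PairwiseDisjoint P) (hx : ∀ v ∈ C, ∀ e ∈ P v, 1 ≤ x e)
    (hr : r ∉ S) : (C ∩ S).card ≤ cutCap x S := by
  have hcross : ∀ v, ∃ e, v ∈ C ∩ S → e ∈ P v ∧ Crossing S e := by
    intro v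
    by_cases hv : v ∈ C ∩ S
    · obtain ⟨hvC, hvS⟩ := Finset.mem_inter.mp hv
      obtain ⟨w⟩ := hreach v hvC
      obtain ⟨d, -, hdS, hdS'⟩ := w.exists_boundary_dart (S : Set V) hvS hr
      have hd := (SimpleGraph.mem_edgeSet _).mpr d.adj
      rw [SimpleGraph.edgeSet_fromEdgeSet] at hd
      exact ⟨d.edge, fun _ => ⟨hd.1, d.fst, d.snd, rfl, hdS, hdS'⟩⟩
    · exact ⟨s(r, r), fun h => absurd h hv⟩
  choose f hf using hcross
  calc (C ∩ S).card
      ≤ (univ.filter fun e => Crossing S e ∧ 1 ≤ x e).card := by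
        refine Finset.card_le_card_of_injOn f (fun v hv => ?_) (fun v hv w hw hvw => ?_)
        · obtain ⟨hP, hc⟩ := hf v hv
          exact Finset.mem_filter.mpr ⟨Finset.mem_univ _, hc, hx v (Finset.mem_inter.mp hv).1 _ hP⟩
        · exact hdisj.elim_set (Finset.mem_inter.mp hv).1 (Finset.mem_inter.mp hw).1 (f v)
            (hf v hv).1 (hvw ▸ (hf w hw).1)
    _ ≤ cutCap x S := by
        rw [Finset.card_eq_sum_ones, ← Finset.filter_filter, cutCap]
        exact (Finset.sum_le_sum fun e he => (Finset.mem_filter.mp he).2).trans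
          (Finset.sum_le_sum_of_subset (Finset.filter_subset _ _))

end Cut

section EdgeMult

variable {V ι : Type} [DecidableEq V] [Fintype ι]

def edgeMult (g : ι → Sym2 V) (e : Sym2 V) : ℕ :=
  (univ.filter fun k => g k = e).card

theorem one_le_edgeMult (g : ι → Sym2 V) (k : ι) : 1 ≤ edgeMult g (g k) :=
  Finset.card_pos.mpr ⟨k, by simp⟩

theorem edgeMult_eq_zero {g : ι → Sym2 V} {e : Sym2 V} (he : e ∉ Set.range g) :
    edgeMult g e = 0 := by
  simpa [edgeMult, Finset.card_eq_zero, Finset.filter_eq_empty_iff] using he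

theorem instCost_edgeMult [Fintype V] (w : Sym2 V → ℝ) (g : ι → Sym2 V) :
    instCost w (edgeMult g) = ∑ k, w (g k) := by
  rw [instCost, ← Finset.sum_fiberwise' univ g w]
  simp [edgeMult, mul_comm]

end EdgeMult

end FSand

namespace SandSat

variable {m p : ℕ}

/- Slot `s` of variable `i` is its occurrence in clause `i1 i`, `i2 i`, `i3 i` for `s = 0, 1, 2`;
its cross edge ends at index `attachIdx s`. A route of color `q` from that clause leaves the
gadget through the root neighbour with index `exitIdx q s`, a terminal of the other color;
`terminalIdx q` lists the terminal indices of color `q`. -/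
def terminalIdx : Fin 2 → Fin 2 → Fin 7 := ![![0, 4], ![2, 6]]
def attachIdx : Fin 3 → Fin 7 := ![1, 5, 3]
def exitIdx : Fin 2 → Fin 3 → Fin 7 := ![![2, 6, 2], ![0, 4, 4]]
def slotSign : Fin 3 → Bool := ![true, true, false]
def slotClause (i1 i2 i3 : Fin p → Fin m) (i : Fin p) : Fin 3 → Fin m := ![i1 i, i2 i, i3 i]

theorem exists_terminalIdx_eq_exitIdx : ∀ q s, ∃ q' t, terminalIdx q' t = exitIdx q s := by
  decide

theorem exitIdx_ne_terminalIdx : ∀ q s t, exitIdx q s ≠ terminalIdx q t := by decide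

theorem exitIdx_ne_attachIdx : ∀ q s s', exitIdx q s ≠ attachIdx s' := by decide

theorem attachIdx_injective : Function.Injective attachIdx := by decide

theorem slotSign_ne_of_exitIdx_eq :
    ∀ q s s', exitIdx q s = exitIdx q s' → s ≠ s' → slotSign s ≠ slotSign s' := by
  decide

theorem mem_sandC {q : Fin 2} {v : SandV m p} :
    v ∈ sandC q ↔ (∃ j, v = kv j) ∨ ∃ i t, v = yv i (terminalIdx q t) := by
  fin_cases q <;> simp [sandC, terminalIdx, Fin.exists_fin_two, exists_or, eq_comm]

def legEdge (i : Fin p) (s : Fin 3) (q : Fin 2) : Sym2 (SandV m p) :=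
  s(yv i (exitIdx q s), yv i (attachIdx s))

def linkEdge (i : Fin p) (s : Fin 3) (j : Fin m) : Sym2 (SandV m p) :=
  s(yv i (attachIdx s), kv j)

theorem rootEdge_terminalIdx (i : Fin p) (q t : Fin 2) :
    RootEdge (s(rt, yv (m := m) i (terminalIdx q t))) := by
  fin_cases q <;> fin_cases t <;> exact ⟨i, by simp [terminalIdx]⟩

theorem pathEdge_legEdge (i : Fin p) (s : Fin 3) (q : Fin 2) :
    PathEdge (legEdge (m := m) i s q) := by
  fin_cases q <;> fin_cases s <;> exact ⟨i, by simp [legEdge, exitIdx, attachIdx, Sym2.eq_swap]⟩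

theorem crossEdge_linkEdge {i1 i2 i3 : Fin p → Fin m} {i : Fin p} {s : Fin 3} {j : Fin m}
    (h : slotClause i1 i2 i3 i s = j) : CrossEdge i1 i2 i3 (linkEdge i s j) := by
  subst h
  fin_cases s <;> exact ⟨i, by simp [linkEdge, attachIdx, slotClause]⟩

section Installation

variable (var : Fin m → Fin p) (slot : Fin m → Fin 3)

def installEdge : (Fin p × Fin 2 × Fin 2) ⊕ (Fin m × Fin 2) ⊕ Fin m → Sym2 (SandV m p)
  | .inl (i, q, t) => s(rt, yv i (terminalIdx q t))
  | .inr (.inl (j, q)) => legEdge (var j) (slot j) q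
  | .inr (.inr j) => linkEdge (var j) (slot j) j

def route (q : Fin 2) : SandV m p → Set (Sym2 (SandV m p))
  | some (Sum.inl j) =>
    {s(rt, yv (var j) (exitIdx q (slot j))), legEdge (var j) (slot j) q,
      linkEdge (var j) (slot j) j}
  | u => {s(rt, u)}

theorem reachable_route {q : Fin 2} {u : SandV m p} (hu : u ∈ sandC q) :
    (SimpleGraph.fromEdgeSet (route var slot q u)).Reachable u rt := by
  rcases mem_sandC.mp hu with ⟨j, rfl⟩ | ⟨i, t, rfl⟩
  · have hlink : (SimpleGraph.fromEdgeSet (route var slot q (kv j))).Adj (kv j)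
        (yv (var j) (attachIdx (slot j))) := by
      simp [route, kv, yv, linkEdge, Sym2.eq_swap]
    have hleg : (SimpleGraph.fromEdgeSet (route var slot q (kv j))).Adj
        (yv (var j) (attachIdx (slot j))) (yv (var j) (exitIdx q (slot j))) := by
      simp [route, kv, yv, legEdge, Sym2.eq_swap, (exitIdx_ne_attachIdx _ _ _).symm]
    have hroot : (SimpleGraph.fromEdgeSet (route var slot q (kv j))).Adj
        (yv (var j) (exitIdx q (slot j))) rt := by
      simp [route, kv, yv, rt, Sym2.eq_swap]
    exact hlink.reachable.trans (hleg.reachable.trans hroot.reachable)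
  · exact SimpleGraph.Adj.reachable (by simp [route, yv, rt, Sym2.eq_swap])

theorem one_le_edgeMult_of_mem_route {q : Fin 2} {u : SandV m p} (hu : u ∈ sandC q)
    {e : Sym2 (SandV m p)} (he : e ∈ route var slot q u) :
    1 ≤ FSand.edgeMult (installEdge var slot) e := by
  rcases mem_sandC.mp hu with ⟨j, rfl⟩ | ⟨i, t, rfl⟩
  · simp only [route, kv, Set.mem_insert_iff, Set.mem_singleton_iff] at he
    rcases he with rfl | rfl | rfl
    · obtain ⟨q', t, ht⟩ := exists_terminalIdx_eq_exitIdx q (slot j)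
      rw [← ht]
      exact FSand.one_le_edgeMult _ (Sum.inl (var j, q', t))
    · exact FSand.one_le_edgeMult _ (Sum.inr (Sum.inl (j, q)))
    · exact FSand.one_le_edgeMult _ (Sum.inr (Sum.inr j))
  · rw [Set.mem_singleton_iff.mp he]
    exact FSand.one_le_edgeMult _ (Sum.inl (i, q, t))

theorem eq_or_exitIdx_eq_of_mem_route_kv {q : Fin 2} {j j' : Fin m} {e : Sym2 (SandV m p)}
    (he : e ∈ route var slot q (kv j)) (he' : e ∈ route var slot q (kv j')) :
    j = j' ∨ var j = var j' ∧ exitIdx q (slot j) = exitIdx q (slot j') := by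
  simp only [route, kv, Set.mem_insert_iff, Set.mem_singleton_iff] at he he'
  rcases he with rfl | rfl | rfl <;> rcases he' with h | h | h <;>
    simp_all [legEdge, linkEdge, yv, rt, kv, exitIdx_ne_attachIdx, attachIdx_injective.eq_iff]

theorem terminal_edge_not_mem_route_kv {q t : Fin 2} {i : Fin p} {j : Fin m} :
    s(rt, yv i (terminalIdx q t)) ∉ route var slot q (kv j) := by
  simp [route, kv, legEdge, linkEdge, yv, rt, (exitIdx_ne_terminalIdx _ _ _).symm]

variable {i1 i2 i3 : Fin p → Fin m}

theorem pairwiseDisjoint_route {a : Fin p → Bool}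
    (hclause : ∀ j, slotClause i1 i2 i3 (var j) (slot j) = j)
    (hsign : ∀ j, a (var j) = slotSign (slot j)) (q : Fin 2) :
    ((sandC q : Finset (SandV m p)) : Set (SandV m p)).PairwiseDisjoint (route var slot q) := by
  have hkv : ∀ {j j' : Fin m} {e}, e ∈ route var slot q (kv j) →
      e ∈ route var slot q (kv j') → j = j' := by
    intro j j' e he he'
    rcases eq_or_exitIdx_eq_of_mem_route_kv var slot he he' with h | ⟨hvar, hexit⟩
    · exact h
    by_cases hslot : slot j = slot j'
    · rw [← hclause j, ← hclause j', hvar, hslot]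
    · exact absurd (by rw [← hsign, ← hsign, hvar]) (slotSign_ne_of_exitIdx_eq q _ _ hexit hslot)
  intro u hu u' hu' hne
  refine Set.disjoint_left.mpr fun e he he' => hne ?_
  rcases mem_sandC.mp hu with ⟨j, rfl⟩ | ⟨i, t, rfl⟩ <;>
    rcases mem_sandC.mp hu' with ⟨j', rfl⟩ | ⟨i', t', rfl⟩
  · rw [hkv he he']
  · exact absurd (Set.mem_singleton_iff.mp he' ▸ he) (terminal_edge_not_mem_route_kv var slot)
  · exact absurd (Set.mem_singleton_iff.mp he ▸ he') (terminal_edge_not_mem_route_kv var slot)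
  · exact Sym2.congr_right.mp
      ((Set.mem_singleton_iff.mp he).symm.trans (Set.mem_singleton_iff.mp he'))

theorem installEdge_mem_edgeSet (hclause : ∀ j, slotClause i1 i2 i3 (var j) (slot j) = j)
    (k : (Fin p × Fin 2 × Fin 2) ⊕ (Fin m × Fin 2) ⊕ Fin m) :
    installEdge var slot k ∈ (sandG i1 i2 i3).edgeSet := by
  rw [sandG, SimpleGraph.edgeSet_fromEdgeSet]
  rcases k with ⟨i, q, t⟩ | ⟨j, q⟩ | j
  · exact ⟨Or.inl (rootEdge_terminalIdx i q t), by simp [installEdge, rt, yv]⟩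
  · exact ⟨Or.inr (Or.inl (pathEdge_legEdge _ _ q)),
      by simp [installEdge, legEdge, yv, exitIdx_ne_attachIdx]⟩
  · exact ⟨Or.inr (Or.inr (crossEdge_linkEdge (hclause j))),
      by simp [installEdge, linkEdge, yv, kv]⟩

theorem feasible_install {a : Fin p → Bool}
    (hclause : ∀ j, slotClause i1 i2 i3 (var j) (slot j) = j)
    (hsign : ∀ j, a (var j) = slotSign (slot j)) :
    FSand.Feasible (sandG i1 i2 i3) rt sandC (FSand.edgeMult (installEdge var slot)) :=
  ⟨fun _ he => FSand.edgeMult_eq_zero fun ⟨k, hk⟩ =>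
      he (hk ▸ installEdge_mem_edgeSet var slot hclause k),
    fun _ hr q => FSand.card_inter_le_cutCap _ (route var slot q)
      (fun _ hu => reachable_route var slot hu) (pairwiseDisjoint_route var slot hclause hsign q)
      (fun _ hu _ he => one_le_edgeMult_of_mem_route var slot hu he) hr⟩

end Installation

theorem not_rootEdge_of_pathEdge {e : Sym2 (SandV m p)} (h : PathEdge e) : ¬ RootEdge e := by
  obtain ⟨i, h⟩ := h
  rcases h with rfl | rfl | rfl | rfl | rfl | rfl <;> simp [RootEdge, rt, yv]

variable {M : ℝ} {i1 i2 i3 : Fin p → Fin m} {e : Sym2 (SandV m p)}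

theorem not_rootEdge_of_crossEdge (h : CrossEdge i1 i2 i3 e) : ¬ RootEdge e := by
  obtain ⟨i, h⟩ := h
  rcases h with rfl | rfl | rfl <;> simp [RootEdge, rt, yv, kv]

theorem not_pathEdge_of_crossEdge (h : CrossEdge i1 i2 i3 e) : ¬ PathEdge e := by
  obtain ⟨i, h⟩ := h
  rcases h with rfl | rfl | rfl <;> simp [PathEdge, yv, kv]

theorem sandW_of_rootEdge (h : RootEdge e) : sandW M i1 i2 i3 e = 2 := if_pos h

theorem sandW_of_pathEdge (h : PathEdge e) : sandW M i1 i2 i3 e = 1 := by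
  rw [sandW, if_neg (not_rootEdge_of_pathEdge h), if_pos h]

theorem sandW_of_crossEdge (h : CrossEdge i1 i2 i3 e) : sandW M i1 i2 i3 e = M := by
  rw [sandW, if_neg (not_rootEdge_of_crossEdge h), if_neg (not_pathEdge_of_crossEdge h), if_pos h]

theorem instCost_install (var : Fin m → Fin p) (slot : Fin m → Fin 3)
    (hclause : ∀ j, slotClause i1 i2 i3 (var j) (slot j) = j) :
    FSand.instCost (sandW M i1 i2 i3) (FSand.edgeMult (installEdge var slot)) =
      (M + 2) * m + 8 * p := by
  simp only [FSand.instCost_edgeMult, installEdge, Fintype.sum_sum_type,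
    sandW_of_rootEdge (rootEdge_terminalIdx _ _ _), sandW_of_pathEdge (pathEdge_legEdge _ _ _),
    fun j => sandW_of_crossEdge (M := M) (crossEdge_linkEdge (hclause j)),
    sum_const, card_univ, Fintype.card_prod, Fintype.card_fin, nsmul_eq_mul, Nat.cast_mul,
    Nat.cast_ofNat, mul_one]
  ring

theorem exists_slot_of_satisfied {a : Fin p → Bool} {j : Fin m}
    (h : (∃ i, (i1 i = j ∨ i2 i = j) ∧ a i = true) ∨ ∃ i, i3 i = j ∧ a i = false) :
    ∃ c : Fin p × Fin 3, slotClause i1 i2 i3 c.1 c.2 = j ∧ a c.1 = slotSign c.2 := by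
  rcases h with ⟨i, hi1 | hi2, ha⟩ | ⟨i, hi3, ha⟩
  · exact ⟨(i, 0), hi1, ha⟩
  · exact ⟨(i, 1), hi2, ha⟩
  · exact ⟨(i, 2), hi3, ha⟩

end SandSat

open FSand SandSat in
theorem stmt_6_general {m p : ℕ} (i1 i2 i3 : Fin p → Fin m)
    (M : ℝ)
    (hsat : Satisfiable i1 i2 i3) :
    ∃ x : Sym2 (SandV m p) → ℕ,
      Feasible (sandG i1 i2 i3) rt sandC x ∧
      instCost (sandW M i1 i2 i3) x ≤ (M + 2) * m + 8 * p := by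
  obtain ⟨a, ha⟩ := hsat
  choose c hc using fun j => exists_slot_of_satisfied (ha j)
  exact ⟨_, feasible_install (fun j => (c j).1) (fun j => (c j).2) (fun j => (hc j).1)
    (fun j => (hc j).2), (instCost_install _ _ fun j => (hc j).1).le⟩

open FSand SandSat in
/-- completeness: if the SAT formula is satisfiable, the constructed
two-color f-SAND instance has a feasible capacity installation of cost at most
`(M+2)·m + 8p`. -/
theorem stmt_6 {m p : ℕ} (i1 i2 i3 : Fin p → Fin m)
    (hocc : ∀ i, i1 i ≠ i2 i ∧ i1 i ≠ i3 i ∧ i2 i ≠ i3 i)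
    (M : ℝ) (hM : 2 * (m : ℝ) + 8 * p < M)
    (hsat : Satisfiable i1 i2 i3) :
    ∃ x : Sym2 (SandV m p) → ℕ,
      Feasible (sandG i1 i2 i3) rt sandC x ∧
      instCost (sandW M i1 i2 i3) x ≤ (M + 2) * m + 8 * p :=
  stmt_6_general i1 i2 i3 M hsat
end

section
/- Let G = (V,E) be a graph on n vertices with edge-expansion at least 1, i.e., every S ⊆ V with |S| ≤ n/2 satisfies |δ_G(S)| ≥ |S|. Let b ≤ n, let G' be obtained from G by adding a new root vertex r adjacent to every vertex of V, and let W ⊆ V with |W| = b. Consider the capacity installation on G' assigning capacity 1 to every edge of G and to each edge {r, w} with w ∈ W, and capacity 0 to all other root edges. Then for every C ⊆ V with |C| = b and every S ⊆ V, the total capacity on edges of G' with exactly one endpoint in S is at least |S ∩ C|; hence this installation is a feasible solution to the f-SAND instance on G' with root r whose colors are all b-element subsets of V, and when each root edge costs n/b and each edge of G costs 1, its cost is n + |E|. -/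
/-!
If `|S| ≤ n/2`, expansion alone pays for `S ∩ C`. Otherwise the complement is small, so
expansion gives `|δ(S)| ≥ n - |S|`, while `S` must meet the `b`-set `W` in at least
`|S| + b - n` vertices; together the graph edges and the root edges into `S ∩ W` carry
at least `b ≥ |S ∩ C|` units across the cut.
-/

open scoped Classical
open Finset

namespace FSand

/-- The graph `G'` obtained from `G` by adding a new root vertex (`none`) adjacent to
every vertex of `G`. -/
def rootJoin {V : Type} (G : SimpleGraph V) : SimpleGraph (Option V) where
  Adj a b :=
    (a = none ∧ ∃ v, b = some v) ∨ (b = none ∧ ∃ u, a = some u) ∨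
      (∃ u v, a = some u ∧ b = some v ∧ G.Adj u v)
  symm := by
    constructor
    rintro a b (⟨ha, v, hb⟩ | ⟨hb, u, ha⟩ | ⟨u, v, ha, hb, h⟩)
    · exact Or.inr (Or.inl ⟨ha, v, hb⟩)
    · exact Or.inl ⟨hb, u, ha⟩
    · exact Or.inr (Or.inr ⟨v, u, hb, ha, h.symm⟩)
  loopless := by
    constructor
    rintro a (⟨ha, v, hb⟩ | ⟨hb, u, ha⟩ | ⟨u, v, ha, hb, h⟩)
    · rw [ha] at hb; exact absurd hb (by simp)
    · rw [hb] at ha; exact absurd ha (by simp)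
    · rw [ha] at hb; exact G.loopless.irrefl u (by cases hb; exact h)

end FSand

namespace FSand

section

variable {V : Type}

def rootEdge : V ↪ Sym2 (Option V) where
  toFun w := s(none, some w)
  inj' a b h := by simpa using h

lemma disjoint_map_sym2Map_some_map_rootEdge (E : Finset (Sym2 V)) (W : Finset V) :
    Disjoint (E.map Function.Embedding.some.sym2Map) (W.map rootEdge) := by
  simp only [disjoint_left, mem_map]
  rintro _ ⟨e, -, rfl⟩ ⟨w, -, h⟩
  have : none ∈ Function.Embedding.some.sym2Map e := h ▸ Sym2.mem_mk_left _ _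
  simp at this

lemma crossing_image_map_iff {V' : Type} [DecidableEq V'] {f : V → V'}
    (hf : Function.Injective f) (S : Finset V) (e : Sym2 V) :
    Crossing (S.image f) (e.map f) ↔ Crossing S e := by
  induction e using Sym2.ind with
  | _ u v =>
    rw [Sym2.map_mk]
    constructor
    · rintro ⟨a, c, h, ha, hc⟩
      rcases Sym2.eq_iff.mp h with ⟨rfl, rfl⟩ | ⟨rfl, rfl⟩
      · exact ⟨u, v, rfl, hf.mem_finset_image.mp ha, mt hf.mem_finset_image.mpr hc⟩
      · exact ⟨v, u, Sym2.eq_swap, hf.mem_finset_image.mp ha, mt hf.mem_finset_image.mpr hc⟩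
    · rintro ⟨a, c, h, ha, hc⟩
      refine ⟨f a, f c, ?_, hf.mem_finset_image.mpr ha, mt hf.mem_finset_image.mp hc⟩
      rw [← Sym2.map_mk, h, Sym2.map_mk]

lemma crossing_image_some_rootEdge_iff [DecidableEq V] (S : Finset V) (w : V) :
    Crossing (S.image some) (rootEdge w) ↔ w ∈ S := by
  change Crossing _ s(none, some w) ↔ _
  constructor
  · rintro ⟨a, c, h, ha, -⟩
    rcases Sym2.eq_iff.mp h with ⟨rfl, rfl⟩ | ⟨rfl, rfl⟩
    · simp at ha
    · simpa using ha
  · intro hw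
    exact ⟨some w, none, Sym2.eq_swap, mem_image_of_mem _ hw, by simp⟩

end

variable {V : Type} [Fintype V] [DecidableEq V]

noncomputable def edgeCut (G : SimpleGraph V) (S : Finset V) : Finset (Sym2 V) :=
  G.edgeFinset.filter (Crossing S)

lemma crossing_compl_iff (S : Finset V) (e : Sym2 V) : Crossing Sᶜ e ↔ Crossing S e := by
  constructor <;>
  · rintro ⟨u, v, rfl, hu, hv⟩
    exact ⟨v, u, Sym2.eq_swap, by simpa using hv, by simpa using hu⟩

lemma edgeCut_compl (G : SimpleGraph V) (S : Finset V) : edgeCut G Sᶜ = edgeCut G S :=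
  filter_congr fun e _ => crossing_compl_iff S e

lemma card_inter_le_card_edgeCut_add_card_inter (G : SimpleGraph V)
    (hexp : ∀ S : Finset V, 2 * #S ≤ Fintype.card V → #S ≤ #(edgeCut G S))
    {C W : Finset V} (hCW : #C ≤ #W) (S : Finset V) :
    #(S ∩ C) ≤ #(edgeCut G S) + #(S ∩ W) := by
  have hSC : #(S ∩ C) ≤ #S := card_le_card inter_subset_left
  by_cases hS : 2 * #S ≤ Fintype.card V
  · exact hSC.trans ((hexp S hS).trans (Nat.le_add_right _ _))
  · have hcompl : #Sᶜ = Fintype.card V - #S := card_compl S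
    have hcut : #Sᶜ ≤ #(edgeCut G S) := edgeCut_compl G S ▸ hexp Sᶜ (by omega)
    have hunion : #(S ∩ W) + #(S ∪ W) = #S + #W := card_inter_add_card_union S W
    have hunion_le : #(S ∪ W) ≤ Fintype.card V := card_le_univ _
    have hCS : #(S ∩ C) ≤ #C := card_le_card inter_subset_right
    omega

noncomputable def installedEdges (G : SimpleGraph V) (W : Finset V) : Finset (Sym2 (Option V)) :=
  G.edgeFinset.map Function.Embedding.some.sym2Map ∪ W.map rootEdge

noncomputable def rootInstall (G : SimpleGraph V) (W : Finset V) : Sym2 (Option V) → ℕ :=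
  fun e => if (∃ u v, e = s(some u, some v) ∧ G.Adj u v) ∨
      (∃ w ∈ W, e = s((none : Option V), some w)) then 1 else 0

lemma mem_installedEdges {G : SimpleGraph V} {W : Finset V} {e : Sym2 (Option V)} :
    e ∈ installedEdges G W ↔ (∃ u v, e = s(some u, some v) ∧ G.Adj u v) ∨
      (∃ w ∈ W, e = s((none : Option V), some w)) := by
  simp only [installedEdges, mem_union, mem_map, SimpleGraph.mem_edgeFinset,
    Function.Embedding.sym2Map_apply, Function.Embedding.some_apply]
  constructor
  · rintro (⟨e', he', rfl⟩ | ⟨w, hw, rfl⟩)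
    · induction e' using Sym2.ind with
      | _ u v => exact Or.inl ⟨u, v, rfl, he'⟩
    · exact Or.inr ⟨w, hw, rfl⟩
  · rintro (⟨u, v, rfl, huv⟩ | ⟨w, hw, rfl⟩)
    · exact Or.inl ⟨s(u, v), huv, rfl⟩
    · exact Or.inr ⟨w, hw, rfl⟩

lemma rootInstall_eq_indicator (G : SimpleGraph V) (W : Finset V) :
    rootInstall G W = fun e => if e ∈ installedEdges G W then 1 else 0 := by
  funext e
  simp only [rootInstall, mem_installedEdges]

lemma cutCap_indicator (A : Finset (Sym2 V)) (S : Finset V) :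
    cutCap (fun e => if e ∈ A then 1 else 0) S = #(A.filter (Crossing S)) := by
  rw [cutCap, sum_boole, Nat.cast_id, filter_filter]
  congr 1
  ext e
  simp [and_comm]

lemma cutCap_rootInstall_image_some (G : SimpleGraph V) (W S : Finset V) :
    cutCap (rootInstall G W) (S.image some) = #(edgeCut G S) + #(S ∩ W) := by
  rw [rootInstall_eq_indicator, cutCap_indicator, installedEdges, filter_union,
    card_union_of_disjoint (disjoint_filter_filter
      (disjoint_map_sym2Map_some_map_rootEdge _ _)),
    filter_map, filter_map, card_map, card_map]
  congr 1
  · exact congrArg card (filter_congr fun e _ =>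
      crossing_image_map_iff (Option.some_injective V) S e)
  · rw [inter_comm, ← filter_mem_eq_inter]
    exact congrArg card (filter_congr fun w _ => crossing_image_some_rootEdge_iff S w)

lemma rootInstall_eq_zero_of_notMem_edgeSet (G : SimpleGraph V) (W : Finset V)
    {e : Sym2 (Option V)} (he : e ∉ (rootJoin G).edgeSet) : rootInstall G W e = 0 := by
  rw [rootInstall, if_neg]
  rintro (⟨u, v, rfl, huv⟩ | ⟨w, -, rfl⟩)
  · exact he ((rootJoin G).mem_edgeSet.mpr (Or.inr (Or.inr ⟨u, v, rfl, rfl, huv⟩)))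
  · exact he ((rootJoin G).mem_edgeSet.mpr (Or.inl ⟨rfl, w, rfl⟩))

lemma instCost_indicator (w : Sym2 V → ℝ) (A : Finset (Sym2 V)) :
    instCost w (fun e => if e ∈ A then 1 else 0) = ∑ e ∈ A, w e := by
  simp only [instCost, Nat.cast_ite, Nat.cast_one, Nat.cast_zero, mul_ite, mul_one, mul_zero]
  rw [sum_ite_mem, univ_inter]

lemma instCost_rootInstall (G : SimpleGraph V) (W : Finset V) (c : ℝ) :
    instCost (fun e : Sym2 (Option V) => if (none : Option V) ∈ e then c else 1)
      (rootInstall G W) = #G.edgeFinset + #W * c := by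
  have hgraph : ∀ e ∈ G.edgeFinset,
      (if (none : Option V) ∈ Function.Embedding.some.sym2Map e then c else 1) = 1 :=
    fun e _ => if_neg (by simp)
  have hroot : ∀ w ∈ W, (if (none : Option V) ∈ rootEdge w then c else 1) = c :=
    fun w _ => if_pos (Sym2.mem_mk_left _ _)
  rw [rootInstall_eq_indicator, instCost_indicator, installedEdges,
    sum_union (disjoint_map_sym2Map_some_map_rootEdge _ _), sum_map, sum_map,
    sum_congr rfl hgraph, sum_congr rfl hroot, sum_const, sum_const, nsmul_eq_mul,
    nsmul_eq_mul, mul_one]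

end FSand

open FSand in
theorem stmt_11_general {V : Type} [Fintype V] [DecidableEq V]
    (G : SimpleGraph V) (n : ℕ) (hn : n = Fintype.card V)
    (hexp : ∀ S : Finset V, 2 * S.card ≤ n →
      S.card ≤ (G.edgeFinset.filter (Crossing S)).card)
    (b : ℕ) (hb : 0 < b)
    (W : Finset V) (hW : W.card = b) :
    (∀ C : Finset V, C.card = b → ∀ S : Finset V,
      (S ∩ C).card ≤
        cutCap (fun e =>
          if (∃ u v, e = s(some u, some v) ∧ G.Adj u v) ∨
              (∃ w ∈ W, e = s((none : Option V), some w)) then 1 else 0)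
          (S.image some)) ∧
    Feasible (rootJoin G) (none : Option V)
      (fun C : {C : Finset V // C.card = b} => C.1.image some)
      (fun e =>
        if (∃ u v, e = s(some u, some v) ∧ G.Adj u v) ∨
            (∃ w ∈ W, e = s((none : Option V), some w)) then 1 else 0) ∧
    instCost (fun e : Sym2 (Option V) =>
        if (none : Option V) ∈ e then (n : ℝ) / b else 1)
      (fun e =>
        if (∃ u v, e = s(some u, some v) ∧ G.Adj u v) ∨
            (∃ w ∈ W, e = s((none : Option V), some w)) then 1 else 0) =
      (n : ℝ) + G.edgeFinset.card := by
  subst hn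
  have hcut : ∀ C : Finset V, #C = b → ∀ S : Finset V,
      #(S ∩ C) ≤ cutCap (rootInstall G W) (S.image some) := fun C hC S => by
    rw [cutCap_rootInstall_image_some]
    exact card_inter_le_card_edgeCut_add_card_inter G hexp (hC.trans hW.symm).le S
  refine ⟨hcut, ⟨fun e he => rootInstall_eq_zero_of_notMem_edgeSet G W he, fun S hS C => ?_⟩, ?_⟩
  · obtain ⟨S, rfl⟩ : ∃ S' : Finset V, S = S'.image some :=
      ⟨S.eraseNone, by rw [image_some_eraseNone, erase_eq_of_notMem hS]⟩
    rw [← image_inter _ _ (Option.some_injective V),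
      card_image_of_injective _ (Option.some_injective V), inter_comm]
    exact hcut C.1 C.2 S
  · refine (instCost_rootInstall G W _).trans ?_
    rw [hW]
    field_simp
    ring

open FSand in
/-- if `G` has edge-expansion at least 1, then installing one unit of
capacity on every edge of `G` and on `b` root edges (to the set `W`) cuts every set `S`
with capacity at least `|S ∩ C|` for every `b`-set `C`; hence it is feasible for the
f-SAND instance whose colors are all `b`-element subsets, and with root edges of cost
`n/b` and graph edges of cost `1` its cost is `n + |E|`. -/
theorem stmt_11 {V : Type} [Fintype V] [DecidableEq V]
    (G : SimpleGraph V) (n : ℕ) (hn : n = Fintype.card V)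
    (hexp : ∀ S : Finset V, 2 * S.card ≤ n →
      S.card ≤ (G.edgeFinset.filter (Crossing S)).card)
    (b : ℕ) (hb : 0 < b) (hbn : b ≤ n)
    (W : Finset V) (hW : W.card = b) :
    (∀ C : Finset V, C.card = b → ∀ S : Finset V,
      (S ∩ C).card ≤
        cutCap (fun e =>
          if (∃ u v, e = s(some u, some v) ∧ G.Adj u v) ∨
              (∃ w ∈ W, e = s((none : Option V), some w)) then 1 else 0)
          (S.image some)) ∧
    Feasible (rootJoin G) (none : Option V)
      (fun C : {C : Finset V // C.card = b} => C.1.image some)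
      (fun e =>
        if (∃ u v, e = s(some u, some v) ∧ G.Adj u v) ∨
            (∃ w ∈ W, e = s((none : Option V), some w)) then 1 else 0) ∧
    instCost (fun e : Sym2 (Option V) =>
        if (none : Option V) ∈ e then (n : ℝ) / b else 1)
      (fun e =>
        if (∃ u v, e = s(some u, some v) ∧ G.Adj u v) ∨
            (∃ w ∈ W, e = s((none : Option V), some w)) then 1 else 0) =
      (n : ℝ) + G.edgeFinset.card :=
  stmt_11_general G n hn hexp b hb W hW
end

section
/- Let G=(V,E) be a finite connected undirected graph with edge costs w : E → ℝ≥0, let r, t_1, …, t_k be distinct vertices, and consider the f-SAND instance with root r and singleton colors C_i = {t_i} for i ∈ [k]. Then the minimum cost of a feasible capacity installation equals the minimum total edge weight of a connected subgraph of G containing all of r, t_1, …, t_k (i.e., the minimum Steiner tree cost for terminals {r, t_1, …, t_k}). -/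
open scoped Classical
open Finset

/-! A feasible installation puts positive capacity on some edge of every cut separating a
terminal from `r`, so the edges of positive capacity connect every terminal to `r`; the
component of `r` among them is a Steiner subgraph, and with nonnegative weights it costs at most
the installation. Conversely, a singleton color demands only one unit across a cut, and a path
from the terminal to `r` inside a Steiner subgraph crosses every cut separating them, so the
indicator of the subgraph's edges is a feasible installation of the same cost. -/

namespace SimpleGraph

variable {V : Type*} {G : SimpleGraph V}

theorem Subgraph.Connected.exists_adj_crossing {H : G.Subgraph} (hH : H.Connected) {S : Set V}
    {u v : V} (hu : u ∈ H.verts) (hv : v ∈ H.verts) (huS : u ∈ S) (hvS : v ∉ S) :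
    ∃ a ∈ S, ∃ b ∉ S, H.Adj a b := by
  obtain ⟨p⟩ := hH.preconnected ⟨u, hu⟩ ⟨v, hv⟩
  obtain ⟨d, -, hdS, hdS'⟩ := p.exists_boundary_dart (Subtype.val ⁻¹' S) huS hvS
  exact ⟨_, hdS, _, hdS', d.adj⟩

theorem exists_connected_subgraph_of_reachable {K : SimpleGraph V} (hK : K ≤ G) {r : V}
    {T : Set V} (hT : ∀ v ∈ T, K.Reachable r v) :
    ∃ H : G.Subgraph, H.Connected ∧ T ⊆ H.verts ∧ H.edgeSet ⊆ K.edgeSet := by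
  let C := K.connectedComponentMk r
  refine ⟨(toSubgraph K hK).induce C.supp, ⟨?_⟩,
    fun v hv => ConnectedComponent.sound (hT v hv).symm, ?_⟩
  · exact C.connected_toSimpleGraph.map ⟨id, fun {a b} h => ⟨a.2, b.2, h⟩⟩
      Function.surjective_id
  · intro e he
    induction e using Sym2.ind with
    | _ u v => exact he.2.2

end SimpleGraph

namespace FSand

open SimpleGraph

variable {V : Type} [Fintype V]

theorem le_cutCap (x : Sym2 V → ℕ) {S : Finset V} {u v : V} (hu : u ∈ S) (hv : v ∉ S) :
    x s(u, v) ≤ cutCap x S :=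
  Finset.single_le_sum (fun _ _ => Nat.zero_le _) (mem_filter.2 ⟨mem_univ _, u, v, rfl, hu, hv⟩)

theorem exists_crossing_of_cutCap_ne_zero {x : Sym2 V → ℕ} {S : Finset V}
    (h : cutCap x S ≠ 0) : ∃ u ∈ S, ∃ v ∉ S, x s(u, v) ≠ 0 := by
  obtain ⟨e, he, hxe⟩ := Finset.exists_ne_zero_of_sum_ne_zero h
  obtain ⟨u, v, rfl, hu, hv⟩ := (mem_filter.1 he).2
  exact ⟨u, hu, v, hv, hxe⟩

theorem Feasible.reachable_of_mem [DecidableEq V] {ι : Type} {G : SimpleGraph V} {r : V}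
    {C : ι → Finset V} {x : Sym2 V → ℕ} (hx : Feasible G r C x) {i : ι} {v : V}
    (hv : v ∈ C i) :
    (G.deleteEdges {e | x e = 0}).Reachable r v := by
  by_contra hrv
  let S := univ.filter ((G.deleteEdges {e | x e = 0}).Reachable v)
  have hvS : v ∈ S := mem_filter.2 ⟨mem_univ _, .rfl⟩
  have hrS : r ∉ S := fun h => hrv (mem_filter.1 h).2.symm
  have hcut : cutCap x S ≠ 0 := by
    have hdemand := hx.2 S hrS i
    have hpos : 0 < (C i ∩ S).card := card_pos.2 ⟨v, mem_inter.2 ⟨hv, hvS⟩⟩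
    omega
  obtain ⟨a, haS, b, hbS, hab⟩ := exists_crossing_of_cutCap_ne_zero hcut
  have hGab : G.Adj a b := by
    by_contra h
    exact hab (hx.1 _ h)
  exact hbS (mem_filter.2 ⟨mem_univ _, (mem_filter.1 haS).2.trans
    (Adj.reachable ((deleteEdges_adj ..).2 ⟨hGab, hab⟩))⟩)

theorem subgraphCost_le_instCost {G : SimpleGraph V} {w : Sym2 V → ℝ} (hw : ∀ e, 0 ≤ w e)
    {H : G.Subgraph} {x : Sym2 V → ℕ} (hHx : ∀ e ∈ H.edgeSet, x e ≠ 0) :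
    subgraphCost G w H ≤ instCost w x := by
  rw [subgraphCost, instCost, sum_filter]
  refine sum_le_sum fun e _ => ?_
  split_ifs with he
  · exact le_mul_of_one_le_right (hw e) (by exact_mod_cast Nat.one_le_iff_ne_zero.2 (hHx e he))
  · exact mul_nonneg (hw e) (Nat.cast_nonneg _)

theorem Feasible.exists_subgraph [DecidableEq V] {ι : Type} {G : SimpleGraph V}
    {w : Sym2 V → ℝ} (hw : ∀ e, 0 ≤ w e) {r : V} {C : ι → Finset V} {x : Sym2 V → ℕ}
    (hx : Feasible G r C x) :
    ∃ H : G.Subgraph, H.Connected ∧ insert r (⋃ i, (C i : Set V)) ⊆ H.verts ∧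
      subgraphCost G w H ≤ instCost w x := by
  have hT : ∀ v ∈ insert r (⋃ i, (C i : Set V)),
      (G.deleteEdges {e | x e = 0}).Reachable r v := by
    rintro v (rfl | hv)
    · exact .rfl
    · obtain ⟨i, hi⟩ := Set.mem_iUnion.1 hv
      exact hx.reachable_of_mem hi
  obtain ⟨H, hH, hTH, hHK⟩ := exists_connected_subgraph_of_reachable (deleteEdges_le _) hT
  refine ⟨H, hH, hTH, subgraphCost_le_instCost hw fun e he => ?_⟩
  rw [edgeSet_deleteEdges] at hHK
  exact (hHK he).2

theorem instCost_indicator_s14 (w : Sym2 V → ℝ) {G : SimpleGraph V} (H : G.Subgraph) :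
    instCost w (H.edgeSet.indicator 1) = subgraphCost G w H := by
  rw [instCost, subgraphCost, sum_filter]
  refine sum_congr rfl fun e _ => ?_
  by_cases he : e ∈ H.edgeSet <;> simp [he]

theorem feasible_indicator [DecidableEq V] {ι : Type} {G : SimpleGraph V} {r : V}
    {C : ι → Finset V} {H : G.Subgraph} (hH : H.Connected) (hr : r ∈ H.verts)
    (hCH : ∀ i, (C i : Set V) ⊆ H.verts) (hC : ∀ i, (C i).card ≤ 1) :
    Feasible G r C (H.edgeSet.indicator 1) := by
  refine ⟨fun e he => Set.indicator_of_notMem (fun h => he (H.edgeSet_subset h)) _, ?_⟩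
  intro S hrS i
  obtain hCS | ⟨v, hv⟩ := (C i ∩ S).eq_empty_or_nonempty
  · simp [hCS]
  obtain ⟨hvC, hvS⟩ := mem_inter.1 hv
  obtain ⟨a, haS, b, hbS, hab⟩ :=
    hH.exists_adj_crossing (hCH i hvC) hr (S := (S : Set V)) hvS hrS
  calc (C i ∩ S).card ≤ 1 := (card_le_card inter_subset_left).trans (hC i)
    _ = H.edgeSet.indicator 1 s(a, b) := by simp [hab]
    _ ≤ cutCap _ S := le_cutCap _ haS hbS

end FSand

open FSand in
theorem stmt_14_general {V : Type} [Fintype V] [DecidableEq V]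
    (G : SimpleGraph V)
    (w : Sym2 V → ℝ) (hw : ∀ e, 0 ≤ w e)
    (r : V) (k : ℕ) (t : Fin k → V) :
    sInf {c | ∃ x : Sym2 V → ℕ,
        Feasible G r (fun i : Fin k => {t i}) x ∧ instCost w x = c} =
      steinerCost G w (insert r (Set.range t)) := by
  refine csInf_eq_csInf_of_forall_exists_le ?_ ?_
  · rintro _ ⟨x, hx, rfl⟩
    obtain ⟨H, hH, hT, hcost⟩ := hx.exists_subgraph hw
    exact ⟨_, ⟨H, hH, by simpa [Set.range] using hT, rfl⟩, hcost⟩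
  · rintro _ ⟨H, hH, hT, rfl⟩
    refine ⟨_, ⟨_, feasible_indicator hH (hT (.inl rfl)) ?_ fun i => by simp,
      instCost_indicator_s14 w H⟩, le_rfl⟩
    intro i
    simpa using hT (.inr ⟨i, rfl⟩)

open FSand in
/-- for singleton colors `C_i = {t_i}`, the minimum cost of a feasible
installation equals the minimum Steiner tree cost for the terminals `{r, t_1, …, t_k}`. -/
theorem stmt_14 {V : Type} [Fintype V] [DecidableEq V]
    (G : SimpleGraph V) (hGconn : G.Connected)
    (w : Sym2 V → ℝ) (hw : ∀ e, 0 ≤ w e)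
    (r : V) (k : ℕ) (t : Fin k → V)
    (ht : Function.Injective t) (htr : ∀ i, t i ≠ r) :
    sInf {c | ∃ x : Sym2 V → ℕ,
        Feasible G r (fun i : Fin k => {t i}) x ∧ instCost w x = c} =
      steinerCost G w (insert r (Set.range t)) :=
  stmt_14_general G w hw r k t
end
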